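/- Suppose f: R^n → R is continuously differentiable, the level set D = {x : f(x) ≤ f(x_1)} is bounded, f is twice differentiable with ‖∇²f(x)‖ ≤ M on the relevant region, and the iterates x_{k+1} = x_k − α_k g_k (g_k = ∇f(x_k)) satisfy the Armijo–Goldstein conditions f(x_k − α_k g_k) ≤ f(x_k) − α_k ρ g_kᵀg_k and f(x_k − α_k g_k) ≥ f(x_k) − α_k(1−ρ) g_kᵀg_k with 0 < ρ < 1/2. Then lim inf_{k→∞} ‖g_k‖ = 0 (indeed ‖g_k‖ → 0). -/

import Mathlib

/-!
The Goldstein condition, combined with the descent lemma for the Lipschitz derivative, forces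
`α_k ≥ ρ / M` whenever `g_k ≠ 0`; the Armijo condition then gives
`ρ² ‖g_k‖² ≤ M (f x_k - f x_{k+1})`. The values `f x_k` decrease and are bounded below, since the
sublevel set is compact, so the right-hand side tends to zero.
-/

open Filter Set Topology NNReal RealInnerProductSpace

theorem image_le_add_fderiv_add_mul_norm_sq {F : Type*} [NormedAddCommGroup F] [NormedSpace ℝ F]
    {f : F → ℝ} {K : ℝ≥0} (hf : Differentiable ℝ f) (hf' : LipschitzWith K (fderiv ℝ f))
    (x y : F) : f y ≤ f x + fderiv ℝ f x (y - x) + K * ‖y - x‖ ^ 2 := by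
  have hbound : ∀ z ∈ Metric.closedBall x ‖y - x‖, ‖fderiv ℝ f z - fderiv ℝ f x‖ ≤ K * ‖y - x‖ :=
    fun z hz => (hf'.norm_sub_le z x).trans <| by
      gcongr; simpa [dist_eq_norm] using hz
  have hmvt := (convex_closedBall x ‖y - x‖).norm_image_sub_le_of_norm_fderiv_le'
    (fun z _ => hf z) hbound (Metric.mem_closedBall_self (norm_nonneg _))
    (show y ∈ Metric.closedBall x ‖y - x‖ by simp [dist_eq_norm])
  rw [Real.norm_eq_abs, abs_le] at hmvt
  linarith [hmvt.2]

section ArmijoGoldstein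

variable {E : Type*} [NormedAddCommGroup E] [InnerProductSpace ℝ E] [CompleteSpace E]
  {f : E → ℝ} {ρ α : ℝ} {x : E}

def ArmijoCondition (f : E → ℝ) (ρ : ℝ) (x : E) (α : ℝ) : Prop :=
  f (x - α • gradient f x) ≤ f x - α * ρ * ⟪gradient f x, gradient f x⟫

def GoldsteinCondition (f : E → ℝ) (ρ : ℝ) (x : E) (α : ℝ) : Prop :=
  f x - α * (1 - ρ) * ⟪gradient f x, gradient f x⟫ ≤ f (x - α • gradient f x)

theorem ArmijoCondition.image_step_le (h : ArmijoCondition f ρ x α) (hρ : 0 ≤ ρ) (hα : 0 ≤ α) :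
    f (x - α • gradient f x) ≤ f x := by
  have : 0 ≤ α * ρ * ⟪gradient f x, gradient f x⟫ := by
    have := real_inner_self_nonneg (x := gradient f x); positivity
  unfold ArmijoCondition at h
  linarith

theorem GoldsteinCondition.le_mul_step {K : ℝ≥0} (h : GoldsteinCondition f ρ x α)
    (hf : Differentiable ℝ f) (hf' : LipschitzWith K (fderiv ℝ f)) (hα : 0 < α)
    (hg : gradient f x ≠ 0) : ρ ≤ K * α := by
  have hdescent := image_le_add_fderiv_add_mul_norm_sq hf hf' x (x - α • gradient f x)
  rw [sub_sub_cancel_left, norm_neg, norm_smul, Real.norm_eq_abs, abs_of_pos hα, map_neg,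
    ← toDual_gradient, InnerProductSpace.toDual_apply_apply, inner_smul_right,
    real_inner_self_eq_norm_sq] at hdescent
  unfold GoldsteinCondition at h
  rw [real_inner_self_eq_norm_sq] at h
  have hαg : 0 < α * ‖gradient f x‖ ^ 2 := by positivity
  refine le_of_mul_le_mul_left ?_ hαg
  linarith

theorem ArmijoCondition.sq_mul_norm_sq_le {K : ℝ≥0} (harmijo : ArmijoCondition f ρ x α)
    (hgoldstein : GoldsteinCondition f ρ x α) (hf : Differentiable ℝ f)
    (hf' : LipschitzWith K (fderiv ℝ f)) (hρ : 0 ≤ ρ) (hα : 0 < α) :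
    ρ ^ 2 * ‖gradient f x‖ ^ 2 ≤ K * (f x - f (x - α • gradient f x)) := by
  rcases eq_or_ne (gradient f x) 0 with hg | hg
  · have hdecrease := sub_nonneg.2 (harmijo.image_step_le hρ hα.le)
    rw [norm_eq_zero.2 hg, zero_pow two_ne_zero, mul_zero]
    exact mul_nonneg K.2 hdecrease
  · have hstep := hgoldstein.le_mul_step hf hf' hα hg
    unfold ArmijoCondition at harmijo
    rw [real_inner_self_eq_norm_sq] at harmijo
    calc ρ ^ 2 * ‖gradient f x‖ ^ 2 ≤ K * (α * ρ * ‖gradient f x‖ ^ 2) := by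
          have := mul_le_mul_of_nonneg_right hstep (by positivity : 0 ≤ ρ * ‖gradient f x‖ ^ 2)
          linarith
      _ ≤ K * (f x - f (x - α • gradient f x)) := by gcongr; linarith

end ArmijoGoldstein

theorem tendsto_zero_of_le_mul_sub_succ {a c : ℕ → ℝ} {C : ℝ} (ha : Antitone a)
    (hbdd : BddBelow (range a)) (hc : ∀ k, 0 ≤ c k) (h : ∀ k, c k ≤ C * (a k - a (k + 1))) :
    Tendsto c atTop (𝓝 0) := by
  have hlim := tendsto_atTop_ciInf ha hbdd
  have hdiff : Tendsto (fun k => C * (a k - a (k + 1))) atTop (𝓝 0) := by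
    simpa using (hlim.sub (hlim.comp (tendsto_add_atTop_nat 1))).const_mul C
  exact squeeze_zero hc h hdiff

theorem bddBelow_range_of_isBounded_sublevel {X : Type*} [PseudoMetricSpace X] [ProperSpace X]
    {f : X → ℝ} {c : ℝ} (hf : Continuous f) (hbd : Bornology.IsBounded {y | f y ≤ c}) :
    BddBelow (range f) := by
  obtain ⟨m, hm⟩ := (Metric.isCompact_of_isClosed_isBounded (isClosed_le hf continuous_const)
    hbd).bddBelow_image hf.continuousOn
  refine ⟨min m c, ?_⟩
  rintro _ ⟨y, rfl⟩
  by_cases hy : f y ≤ c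
  · exact (min_le_left _ _).trans (hm ⟨y, hy, rfl⟩)
  · exact (min_le_right _ _).trans (not_le.1 hy).le

theorem gradient_method_armijo_goldstein_convergence_general (n : ℕ)
    (f : EuclideanSpace ℝ (Fin n) → ℝ) (M ρ : ℝ)
    (hρ : 0 < ρ)
    (hf : ContDiff ℝ 2 f)
    (x : ℕ → EuclideanSpace ℝ (Fin n)) (α : ℕ → ℝ) (hα : ∀ k, 0 < α k)
    (hbd : Bornology.IsBounded {y | f y ≤ f (x 0)})
    (hhess : ∀ y, ‖fderiv ℝ (fun z => fderiv ℝ f z) y‖ ≤ M)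
    (hiter : ∀ k, x (k+1) = x k - α k • gradient f (x k))
    (harmijo : ∀ k, f (x k - α k • gradient f (x k))
      ≤ f (x k) - α k * ρ * ⟪gradient f (x k), gradient f (x k)⟫)
    (hgoldstein : ∀ k, f (x k) - α k * (1 - ρ) * ⟪gradient f (x k), gradient f (x k)⟫
      ≤ f (x k - α k • gradient f (x k))) :
    Filter.Tendsto (fun k => ‖gradient f (x k)‖) Filter.atTop (nhds 0) := by
  have hfd : Differentiable ℝ f := hf.differentiable (by norm_num)
  have hf' : LipschitzWith M.toNNReal (fderiv ℝ f) :=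
    lipschitzWith_of_nnnorm_fderiv_le ((hf.fderiv_right (m := 1) le_rfl).differentiable one_ne_zero)
      fun y => NNReal.coe_le_coe.1 ((hhess y).trans (Real.le_coe_toNNReal M))
  have hstep (k : ℕ) : f (x (k + 1)) = f (x k - α k • gradient f (x k)) := by rw [hiter]
  have hanti : Antitone (f ∘ x) := antitone_nat_of_succ_le fun k =>
    (hstep k).trans_le (ArmijoCondition.image_step_le (harmijo k) hρ.le (hα k).le)
  have hbdd : BddBelow (range (f ∘ x)) :=
    (bddBelow_range_of_isBounded_sublevel hf.continuous hbd).mono (range_comp_subset_range _ _)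
  have hsq : Tendsto (fun k => ‖gradient f (x k)‖ ^ 2) atTop (𝓝 0) := by
    refine tendsto_zero_of_le_mul_sub_succ (C := M.toNNReal / ρ ^ 2) hanti hbdd
      (fun k => by positivity) fun k => ?_
    rw [div_mul_eq_mul_div, le_div_iff₀' (by positivity), Function.comp_apply,
      Function.comp_apply, hstep]
    exact ArmijoCondition.sq_mul_norm_sq_le (harmijo k) (hgoldstein k) hfd hf' hρ.le (hα k)
  simpa using hsq.sqrt

/-- Convergence of the gradient method with Armijo–Goldstein step size rule: if the level
set of the starting point is bounded, the Hessian is uniformly bounded by `M`, and each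
step `x_{k+1} = x_k - α_k g_k` satisfies both Armijo–Goldstein conditions with
`0 < ρ < 1/2`, then `‖g_k‖ → 0` (so in particular `liminf ‖g_k‖ = 0`). -/
theorem gradient_method_armijo_goldstein_convergence (n : ℕ)
    (f : EuclideanSpace ℝ (Fin n) → ℝ) (M ρ : ℝ)
    (hρ : 0 < ρ) (hρ' : ρ < 1/2) (hM : 0 < M)
    (hf : ContDiff ℝ 2 f)
    (x : ℕ → EuclideanSpace ℝ (Fin n)) (α : ℕ → ℝ) (hα : ∀ k, 0 < α k)
    (hbd : Bornology.IsBounded {y | f y ≤ f (x 0)})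
    (hhess : ∀ y, ‖fderiv ℝ (fun z => fderiv ℝ f z) y‖ ≤ M)
    (hiter : ∀ k, x (k+1) = x k - α k • gradient f (x k))
    (harmijo : ∀ k, f (x k - α k • gradient f (x k))
      ≤ f (x k) - α k * ρ * ⟪gradient f (x k), gradient f (x k)⟫)
    (hgoldstein : ∀ k, f (x k) - α k * (1 - ρ) * ⟪gradient f (x k), gradient f (x k)⟫
      ≤ f (x k - α k • gradient f (x k))) :
    Filter.Tendsto (fun k => ‖gradient f (x k)‖) Filter.atTop (nhds 0) :=
  gradient_method_armijo_goldstein_convergence_general n f M ρ hρ hf x α hα hbd hhess hiter harmijo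
    hgoldstein
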